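/- arXiv:1210.4468 — 2 statements merged into one kernel-verified Lean document; each statement's English description precedes it below -/
import Mathlib

section
/- Let 0 < α < δ, c0 > 0 and K > 0. Let S be a real random variable such that |P{|S| > x} − c0 x^{−α}| ≤ K x^{−δ} for all x > 0. Let Z be a nonnegative random variable, independent of S, with E[Z] = 1 and E[Z^{δ/α}] < +∞. Then lim_{x→+∞} x^α · P{Z^{1/α} |S| > x} = c0. -/
open MeasureTheory ProbabilityTheory Filter

/-- Tail of a scale mixture: if `|P{|S| > x} - c₀ x^{-α}| ≤ K x^{-δ}` for all
`x > 0` with `0 < α < δ`, and `Z ≥ 0` is independent of `S` with `E[Z] = 1` and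
`E[Z^{δ/α}] < ∞`, then `x^α P{Z^{1/α} |S| > x} → c₀` as `x → +∞`. -/
theorem tail_scale_mixture
    {Ω : Type*} [MeasurableSpace Ω] (P : Measure Ω) [IsProbabilityMeasure P]
    (α δ c0 K : ℝ) (hα : 0 < α) (hαδ : α < δ) (hc0 : 0 < c0) (hK : 0 < K)
    (S Z : Ω → ℝ) (hSmeas : Measurable S) (hZmeas : Measurable Z)
    (hTail : ∀ x : ℝ, 0 < x →
      |(P {ω | |S ω| > x}).toReal - c0 * x ^ (-α)| ≤ K * x ^ (-δ))
    (hZnonneg : ∀ ω, 0 ≤ Z ω)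
    (hIndep : IndepFun S Z P)
    (hZint : Integrable Z P) (hZmean : ∫ ω, Z ω ∂P = 1)
    (hZmoment : Integrable (fun ω => Z ω ^ (δ / α)) P) :
    Tendsto (fun x : ℝ => x ^ α * (P {ω | Z ω ^ (1 / α) * |S ω| > x}).toReal)
      atTop (nhds c0) := by
  have hδ : 0 < δ := hα.trans hαδ
  have hrpow_cont : Continuous (fun z : ℝ => z ^ (1/α)) :=
    Real.continuous_rpow_const (by positivity)
  set μS := P.map S with hμS
  have hμSprob : IsProbabilityMeasure μS := Measure.isProbabilityMeasure_map hSmeas.aemeasurable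
  have hAmeas : ∀ x : ℝ, MeasurableSet {p : ℝ × ℝ | p.1 ^ (1/α) * |p.2| > x} := fun x =>
    measurableSet_lt measurable_const
      (((hrpow_cont.measurable.comp measurable_fst)).mul measurable_snd.abs)
  -- key disintegration identity
  have key : ∀ x : ℝ, P {ω | Z ω ^ (1/α) * |S ω| > x}
      = ∫⁻ ω, μS {s | Z ω ^ (1/α) * |s| > x} ∂P := by
    intro x
    have hmap : P.map (fun ω => (Z ω, S ω)) = (P.map Z).prod μS :=
      (indepFun_iff_map_prod_eq_prod_map_map hZmeas.aemeasurable
        hSmeas.aemeasurable).mp hIndep.symm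
    have h1 : {ω | Z ω ^ (1/α) * |S ω| > x}
        = (fun ω => (Z ω, S ω)) ⁻¹' {p : ℝ × ℝ | p.1 ^ (1/α) * |p.2| > x} := rfl
    rw [h1, ← Measure.map_apply (hZmeas.prodMk hSmeas) (hAmeas x), hmap,
      Measure.prod_apply (hAmeas x),
      lintegral_map (measurable_measure_prodMk_left (hAmeas x)) hZmeas]
    rfl
  have hhmeas : ∀ x : ℝ, Measurable (fun ω => μS {s | Z ω ^ (1/α) * |s| > x}) := fun x =>
    (measurable_measure_prodMk_left (hAmeas x)).comp hZmeas
  -- real integral form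
  have intform : ∀ x : ℝ, (P {ω | Z ω ^ (1/α) * |S ω| > x}).toReal
      = ∫ ω, (μS {s | Z ω ^ (1/α) * |s| > x}).toReal ∂P := by
    intro x
    rw [key x, ← integral_toReal ((hhmeas x).aemeasurable)
      (ae_of_all _ fun ω => measure_lt_top _ _)]
  -- integrability of the section-measure function
  have hInt : ∀ x : ℝ, Integrable (fun ω => (μS {s | Z ω ^ (1/α) * |s| > x}).toReal) P := by
    intro x
    refine Integrable.mono' (integrable_const 1)
      ((hhmeas x).ennreal_toReal.aestronglyMeasurable) (ae_of_all _ fun ω => ?_)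
    rw [Real.norm_eq_abs, abs_of_nonneg ENNReal.toReal_nonneg]
    simpa using ENNReal.toReal_mono ENNReal.one_ne_top prob_le_one
  -- pointwise bound
  have pointwise : ∀ x : ℝ, 0 < x → ∀ ω,
      |x ^ α * (μS {s | Z ω ^ (1/α) * |s| > x}).toReal - c0 * Z ω|
        ≤ K * x ^ (α - δ) * Z ω ^ (δ / α) := by
    intro x hx ω
    rcases (hZnonneg ω).eq_or_lt with h0 | hzpos
    · simp only [← h0]
      have h1 : (0:ℝ) ^ (1/α) = 0 := Real.zero_rpow (one_div_ne_zero hα.ne')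
      have h2 : {s : ℝ | (0:ℝ) ^ (1/α) * |s| > x} = ∅ := by
        ext s; rw [Set.mem_setOf_eq, h1]
        simp [not_lt.mpr hx.le]
      rw [h2]
      have h3 : (0:ℝ) ^ (δ/α) = 0 := Real.zero_rpow (ne_of_gt (div_pos hδ hα))
      simp [h3]
    · set z := Z ω with hz
      have hc : 0 < z ^ (1/α) := Real.rpow_pos_of_pos hzpos _
      have hy : 0 < x / z ^ (1/α) := div_pos hx hc
      have hset : {s : ℝ | z ^ (1/α) * |s| > x} = {s : ℝ | |s| > x / z ^ (1/α)} := by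
        ext s; simp only [Set.mem_setOf_eq, gt_iff_lt, div_lt_iff₀ hc]
        rw [mul_comm]
      have hpre : μS {s : ℝ | |s| > x / z ^ (1/α)} = P {ω' | |S ω'| > x / z ^ (1/α)} := by
        rw [hμS, Measure.map_apply hSmeas
          (measurableSet_lt measurable_const continuous_abs.measurable)]
        rfl
      have htail := hTail _ hy
      have e1 : (x / z ^ (1/α)) ^ (-α) = x ^ (-α) * z := by
        rw [Real.div_rpow hx.le hc.le, ← Real.rpow_mul hzpos.le,
          show (1/α) * (-α) = -1 by field_simp, Real.rpow_neg_one]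
        field_simp
      have e2 : (x / z ^ (1/α)) ^ (-δ) = x ^ (-δ) * z ^ (δ/α) := by
        rw [Real.div_rpow hx.le hc.le, ← Real.rpow_mul hzpos.le,
          show (1/α) * (-δ) = -(δ/α) by field_simp,
          Real.rpow_neg hzpos.le]
        field_simp
      have hxa : x ^ α * x ^ (-α) = 1 := by
        rw [← Real.rpow_add hx]; simp
      have hxd : x ^ α * x ^ (-δ) = x ^ (α - δ) := by
        rw [← Real.rpow_add hx]; ring_nf
      have hxpos : (0:ℝ) < x ^ α := Real.rpow_pos_of_pos hx _
      rw [hset, hpre]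
      set T := (P {ω' | |S ω'| > x / z ^ (1/α)}).toReal with hT
      calc |x ^ α * T - c0 * z|
          = x ^ α * |T - c0 * (x / z ^ (1/α)) ^ (-α)| := by
            have inner : x ^ α * T - c0 * z
                = x ^ α * (T - c0 * (x / z ^ (1/α)) ^ (-α)) := by
              rw [e1]; linear_combination (c0 * z) * hxa
            rw [inner, abs_mul, abs_of_pos hxpos]
        _ ≤ x ^ α * (K * (x / z ^ (1/α)) ^ (-δ)) :=
            mul_le_mul_of_nonneg_left htail hxpos.le
        _ = K * x ^ (α - δ) * z ^ (δ/α) := by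
            rw [e2]
            linear_combination (K * z ^ (δ/α)) * hxd
  -- integrate the bound
  set M := ∫ ω, Z ω ^ (δ/α) ∂P with hM
  have bound : ∀ x : ℝ, 0 < x →
      |x ^ α * (P {ω | Z ω ^ (1/α) * |S ω| > x}).toReal - c0| ≤ K * M * x ^ (α - δ) := by
    intro x hx
    rw [intform x]
    have hInt1 : Integrable
        (fun ω => x ^ α * (μS {s | Z ω ^ (1/α) * |s| > x}).toReal) P := (hInt x).const_mul _
    have hInt2 : Integrable (fun ω => c0 * Z ω) P := hZint.const_mul c0
    have heq : x ^ α * (∫ ω, (μS {s | Z ω ^ (1/α) * |s| > x}).toReal ∂P) - c0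
        = ∫ ω, (x ^ α * (μS {s | Z ω ^ (1/α) * |s| > x}).toReal - c0 * Z ω) ∂P := by
      rw [integral_sub hInt1 hInt2, integral_const_mul, integral_const_mul, hZmean]
      ring
    rw [heq]
    calc |∫ ω, (x ^ α * (μS {s | Z ω ^ (1/α) * |s| > x}).toReal - c0 * Z ω) ∂P|
        ≤ ∫ ω, |x ^ α * (μS {s | Z ω ^ (1/α) * |s| > x}).toReal - c0 * Z ω| ∂P := by
          simpa [Real.norm_eq_abs] using
            norm_integral_le_integral_norm
              (fun ω => x ^ α * (μS {s | Z ω ^ (1/α) * |s| > x}).toReal - c0 * Z ω) (μ := P)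
      _ ≤ ∫ ω, K * x ^ (α - δ) * Z ω ^ (δ/α) ∂P :=
          integral_mono (hInt1.sub hInt2).abs (hZmoment.const_mul _)
            (fun ω => pointwise x hx ω)
      _ = K * x ^ (α - δ) * M := by rw [integral_const_mul]
      _ = K * M * x ^ (α - δ) := by ring
  -- conclude by squeezing
  have hlim : Tendsto (fun x : ℝ => K * M * x ^ (α - δ)) atTop (nhds 0) := by
    have h := (tendsto_rpow_neg_atTop (show (0:ℝ) < δ - α by linarith)).const_mul (K * M)
    simpa [show -(δ - α) = α - δ by ring] using h
  rw [← tendsto_sub_nhds_zero_iff]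
  refine squeeze_zero_norm' ?_ hlim
  filter_upwards [eventually_gt_atTop (0:ℝ)] with x hx
  simpa [Real.norm_eq_abs] using bound x hx
end

section
/- For every x > 0 and every n ≥ 1 with b(n) > 0, the following two-sided bound holds: c0 · Σ_{j=1}^n b_{jn}^α · (1 − R̄(x/b(n))) − (K0²/x^α) · (Σ_{j=1}^n b_{jn}^α)² ≤ x^α P{max_{1≤j≤n} |b_{jn} X_j| > x} ≤ c0 · Σ_{j=1}^n b_{jn}^α · (1 + R̄(x/b(n))). -/
open MeasureTheory ProbabilityTheory Filter


lemma prod_one_sub_bounds (s : Finset ℕ) (p : ℕ → ℝ)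
    (h0 : ∀ j ∈ s, 0 ≤ p j) (h1 : ∀ j ∈ s, p j ≤ 1) :
    1 - ∑ j ∈ s, p j ≤ ∏ j ∈ s, (1 - p j) ∧
    ∏ j ∈ s, (1 - p j) ≤ 1 - (∑ j ∈ s, p j) + (∑ j ∈ s, p j) ^ 2 := by
  induction s using Finset.cons_induction with
  | empty => simp
  | cons a s ha ih =>
    have hpa0 : 0 ≤ p a := h0 a (Finset.mem_cons_self a s)
    have hpa1 : p a ≤ 1 := h1 a (Finset.mem_cons_self a s)
    obtain ⟨ih1, ih2⟩ := ih (fun j hj => h0 j (Finset.mem_cons_of_mem hj))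
      (fun j hj => h1 j (Finset.mem_cons_of_mem hj))
    have hS0 : 0 ≤ ∑ j ∈ s, p j := Finset.sum_nonneg (fun j hj => h0 j (Finset.mem_cons_of_mem hj))
    rw [Finset.prod_cons, Finset.sum_cons]
    set S := ∑ j ∈ s, p j
    set Q := ∏ j ∈ s, (1 - p j)
    constructor
    · nlinarith [mul_le_mul_of_nonneg_left ih1 (by linarith : (0:ℝ) ≤ 1 - p a)]
    · nlinarith [mul_le_mul_of_nonneg_left ih2 (by linarith : (0:ℝ) ≤ 1 - p a)]

/-- Two-sided bound for the tail of the maximum of weighted i.i.d. random variables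
whose common law lies in the domain of normal attraction of an `α`-stable law. -/
theorem max_weighted_tail_bound
    {Ω : Type*} [MeasurableSpace Ω] (P : Measure Ω) [IsProbabilityMeasure P]
    (α : ℝ) (hα0 : 0 < α) (hα2 : α < 2)
    (X : ℕ → Ω → ℝ) (hXmeas : ∀ j, Measurable (X j))
    (hXindep : iIndepFun X P)
    (hXid : ∀ j : ℕ, Measure.map (X j) P = Measure.map (X 1) P)
    (F0 : ℝ → ℝ) (hF0 : ∀ x : ℝ, F0 x = (P {ω | X 1 ω ≤ x}).toReal)
    (c0p c0m : ℝ)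
    (hTailp : Tendsto (fun x : ℝ => x ^ α * (1 - F0 x)) atTop (nhds c0p))
    (hTailm : Tendsto (fun x : ℝ => |x| ^ α * F0 x) atBot (nhds c0m))
    (hc0 : 0 < c0p + c0m)
    -- the function `R` with `P{|X₁| > x} = c₀ x^{-α}(1 + R(x))` for `x > 0`
    (R : ℝ → ℝ)
    (hR : ∀ x : ℝ, 0 < x →
      (P {ω | |X 1 ω| > x}).toReal = (c0p + c0m) * x ^ (-α) * (1 + R x))
    -- `Rbar x = sup_{y ≥ x} |R(y)|` and `Rnorm = sup_{x > 0} |R(x)| < ∞`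
    (Rbar : ℝ → ℝ) (hRbar : ∀ x : ℝ, IsLUB {r : ℝ | ∃ y, x ≤ y ∧ r = |R y|} (Rbar x))
    (Rnorm : ℝ) (hRnorm : IsLUB {r : ℝ | ∃ x, 0 < x ∧ r = |R x|} Rnorm)
    -- the array of nonnegative weights and its row maximum `bn` (assumed positive)
    (b : ℕ → ℕ → ℝ) (hb : ∀ n j, 0 ≤ b n j)
    (n : ℕ) (hn : 1 ≤ n)
    (bn : ℝ) (hbn : IsGreatest {r : ℝ | ∃ j ∈ Finset.Icc 1 n, r = b n j} bn)
    (hbnpos : 0 < bn) :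
    ∀ x : ℝ, 0 < x →
      (c0p + c0m) * (∑ j ∈ Finset.Icc 1 n, b n j ^ α) * (1 - Rbar (x / bn))
          - (((c0p + c0m) * (Rnorm + 1)) ^ 2 / x ^ α)
            * (∑ j ∈ Finset.Icc 1 n, b n j ^ α) ^ 2
        ≤ x ^ α * (P {ω | ∃ j ∈ Finset.Icc 1 n, |b n j * X j ω| > x}).toReal ∧
      x ^ α * (P {ω | ∃ j ∈ Finset.Icc 1 n, |b n j * X j ω| > x}).toReal
        ≤ (c0p + c0m) * (∑ j ∈ Finset.Icc 1 n, b n j ^ α) * (1 + Rbar (x / bn)) := by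
  intro x hx
  set c0 := c0p + c0m with hc0def
  set J : Finset ℕ := Finset.Icc 1 n with hJ
  set A : ℕ → Set Ω := fun j => {ω | |b n j * X j ω| > x} with hA
  have hAmeas : ∀ j, MeasurableSet (A j) := fun j =>
    measurableSet_lt measurable_const (measurable_const.mul (hXmeas j)).abs
  set p : ℕ → ℝ := fun j => (P (A j)).toReal with hp
  have hp0 : ∀ j, 0 ≤ p j := fun j => ENNReal.toReal_nonneg
  have hp1 : ∀ j, p j ≤ 1 := fun j => by
    simpa using ENNReal.toReal_mono (by simp) (prob_le_one (μ := P) (s := A j))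
  -- identical distribution transfer
  have hmapS : MeasurableSet {t : ℝ | |t| > x} :=
    measurableSet_lt measurable_const measurable_id.abs
  -- value of p j for positive weights
  have hkey : ∀ j, 0 < b n j →
      p j = c0 * x ^ (-α) * (b n j) ^ α * (1 + R (x / b n j)) := by
    intro j hbj
    have hAeq : A j = X j ⁻¹' {t : ℝ | |t| > x / b n j} := by
      ext ω
      simp only [hA, Set.mem_setOf_eq, Set.mem_preimage, gt_iff_lt, abs_mul,
        abs_of_pos hbj]
      rw [div_lt_iff₀' hbj]
    have hS : MeasurableSet {t : ℝ | |t| > x / b n j} :=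
      measurableSet_lt measurable_const measurable_id.abs
    have h1 : P (A j) = P {ω | |X 1 ω| > x / b n j} := by
      rw [hAeq, ← Measure.map_apply (hXmeas j) hS, hXid j,
        Measure.map_apply (hXmeas 1) hS]
      rfl
    have h2 := hR (x / b n j) (div_pos hx hbj)
    have h3 : (x / b n j) ^ (-α) = x ^ (-α) * (b n j) ^ α := by
      rw [Real.div_rpow hx.le hbj.le, Real.rpow_neg hbj.le, div_inv_eq_mul]
    show (P (A j)).toReal = _
    rw [h1, h2, h3]
    ring
  -- zero weights give empty events
  have hzero : ∀ j, b n j = 0 → p j = 0 := by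
    intro j hbj
    have : A j = ∅ := by
      ext ω; simp [hA, hbj, not_lt, hx.le]
    simp [hp, this]
  -- Rbar facts
  have hRb := hRbar (x / bn)
  have hRbmem : ∀ y : ℝ, x / bn ≤ y → |R y| ≤ Rbar (x / bn) := fun y hy =>
    hRb.1 ⟨y, hy, rfl⟩
  have hRb0 : 0 ≤ Rbar (x / bn) := le_trans (abs_nonneg _) (hRbmem _ le_rfl)
  have hRnmem : ∀ y : ℝ, 0 < y → |R y| ≤ Rnorm := fun y hy => hRnorm.1 ⟨y, hy, rfl⟩
  have hRn0 : 0 ≤ Rnorm := le_trans (abs_nonneg _) (hRnmem 1 one_pos)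
  -- per-term bounds
  have hxna : (0:ℝ) < x ^ (-α) := Real.rpow_pos_of_pos hx _
  have hxa : (0:ℝ) < x ^ α := Real.rpow_pos_of_pos hx _
  have hbnd : ∀ j ∈ J,
      (c0 * x ^ (-α) * (1 - Rbar (x / bn))) * (b n j) ^ α ≤ p j ∧
      p j ≤ (c0 * x ^ (-α) * (1 + Rbar (x / bn))) * (b n j) ^ α ∧
      p j ≤ (c0 * (Rnorm + 1) * x ^ (-α)) * (b n j) ^ α := by
    intro j hj
    rcases eq_or_lt_of_le (hb n j) with hbj | hbj
    · rw [hzero j hbj.symm, ← hbj, Real.zero_rpow hα0.ne']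
      norm_num
    · have hble : b n j ≤ bn := hbn.2 ⟨j, hj, rfl⟩
      have hyge : x / bn ≤ x / b n j := by
        apply div_le_div_of_nonneg_left hx.le hbj hble
      have hRy := hRbmem _ hyge
      have hRy' := hRnmem _ (div_pos hx hbj)
      have habs1 : 1 - Rbar (x / bn) ≤ 1 + R (x / b n j) := by
        have := abs_le.mp (le_trans le_rfl hRy) |>.1
        linarith [(abs_le.mp hRy).1]
      have habs2 : 1 + R (x / b n j) ≤ 1 + Rbar (x / bn) := by
        linarith [(abs_le.mp hRy).2]
      have habs3 : 1 + R (x / b n j) ≤ Rnorm + 1 := by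
        linarith [(abs_le.mp hRy').2]
      have hfac : (0:ℝ) ≤ c0 * x ^ (-α) * (b n j) ^ α :=
        mul_nonneg (mul_nonneg hc0.le hxna.le) (Real.rpow_nonneg hbj.le _)
      rw [hkey j hbj]
      refine ⟨?_, ?_, ?_⟩
      · linarith [mul_le_mul_of_nonneg_left habs1 hfac]
      · linarith [mul_le_mul_of_nonneg_left habs2 hfac]
      · linarith [mul_le_mul_of_nonneg_left habs3 hfac]
  set S := ∑ j ∈ J, p j with hS
  set B := ∑ j ∈ J, (b n j) ^ α with hB
  have hB0 : 0 ≤ B := Finset.sum_nonneg fun j _ => Real.rpow_nonneg (hb n j) _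
  have hS0 : 0 ≤ S := Finset.sum_nonneg fun j _ => hp0 j
  have hSlow : (c0 * x ^ (-α) * (1 - Rbar (x / bn))) * B ≤ S := by
    rw [hB, Finset.mul_sum]
    exact Finset.sum_le_sum fun j hj => (hbnd j hj).1
  have hSup : S ≤ (c0 * x ^ (-α) * (1 + Rbar (x / bn))) * B := by
    rw [hB, Finset.mul_sum]
    exact Finset.sum_le_sum fun j hj => (hbnd j hj).2.1
  have hSK : S ≤ (c0 * (Rnorm + 1) * x ^ (-α)) * B := by
    rw [hB, Finset.mul_sum]
    exact Finset.sum_le_sum fun j hj => (hbnd j hj).2.2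
  -- union probability via independence
  have hUset : {ω | ∃ j ∈ J, |b n j * X j ω| > x} = ⋃ j ∈ J, A j := by
    ext ω; simp [hA]
  have hUmeas : MeasurableSet (⋃ j ∈ J, A j) :=
    Finset.measurableSet_biUnion J fun j _ => hAmeas j
  have hIndep : P (⋂ j ∈ J, (A j)ᶜ) = ∏ j ∈ J, P ((A j)ᶜ) := by
    apply hXindep.meas_biInter
    intro j _
    refine MeasurableSpace.measurableSet_comap.mpr
      ⟨{t : ℝ | ¬ |b n j * t| > x}, ?_, ?_⟩
    · exact (measurableSet_lt measurable_const
        (measurable_const.mul measurable_id).abs).compl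
    · ext ω; simp [hA]
  have hcompl : (⋃ j ∈ J, A j)ᶜ = ⋂ j ∈ J, (A j)ᶜ := by
    simp [Set.compl_iUnion]
  have hPU : (P (⋃ j ∈ J, A j)).toReal = 1 - ∏ j ∈ J, (1 - p j) := by
    have h1 : (P ((⋃ j ∈ J, A j)ᶜ)).toReal = 1 - (P (⋃ j ∈ J, A j)).toReal := by
      rw [prob_compl_eq_one_sub hUmeas,
        ENNReal.toReal_sub_of_le prob_le_one (by simp)]
      simp
    have h2 : (P ((⋃ j ∈ J, A j)ᶜ)).toReal = ∏ j ∈ J, (1 - p j) := by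
      rw [hcompl, hIndep, ENNReal.toReal_prod]
      refine Finset.prod_congr rfl fun j _ => ?_
      rw [prob_compl_eq_one_sub (hAmeas j),
        ENNReal.toReal_sub_of_le prob_le_one (by simp)]
      simp [hp]
    linarith
  obtain ⟨hB1, hB2⟩ := prod_one_sub_bounds J p (fun j _ => hp0 j) (fun j _ => hp1 j)
  -- PU bounds
  set PU := (P (⋃ j ∈ J, A j)).toReal with hPUdef
  have hPUle : PU ≤ S := by rw [hPU]; linarith
  have hPUge : S - S ^ 2 ≤ PU := by rw [hPU]; linarith
  have hid : x ^ α * x ^ (-α) = 1 := by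
    rw [← Real.rpow_add hx]; simp
  have hgoalset : {ω | ∃ j ∈ Finset.Icc 1 n, |b n j * X j ω| > x} = ⋃ j ∈ J, A j :=
    hUset
  rw [hgoalset]
  constructor
  · -- lower bound
    have hK : S ^ 2 ≤ ((c0 * (Rnorm + 1) * x ^ (-α)) * B) ^ 2 :=
      pow_le_pow_left₀ hS0 hSK 2
    have h1 : c0 * B * (1 - Rbar (x / bn)) ≤ x ^ α * S := by
      calc c0 * B * (1 - Rbar (x / bn))
          = (x ^ α * x ^ (-α)) * (c0 * B * (1 - Rbar (x / bn))) := by rw [hid]; ring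
        _ = x ^ α * ((c0 * x ^ (-α) * (1 - Rbar (x / bn))) * B) := by ring
        _ ≤ x ^ α * S := mul_le_mul_of_nonneg_left hSlow hxa.le
    have hxnainv : x ^ (-α) = (x ^ α)⁻¹ := Real.rpow_neg hx.le α
    have h2 : x ^ α * S ^ 2 ≤ ((c0 * (Rnorm + 1)) ^ 2 / x ^ α) * B ^ 2 := by
      calc x ^ α * S ^ 2 ≤ x ^ α * (((c0 * (Rnorm + 1) * x ^ (-α)) * B) ^ 2) :=
            mul_le_mul_of_nonneg_left hK hxa.le
        _ = ((c0 * (Rnorm + 1)) ^ 2 / x ^ α) * B ^ 2 := by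
            rw [hxnainv]; field_simp
    have h3 : x ^ α * (S - S ^ 2) ≤ x ^ α * PU := mul_le_mul_of_nonneg_left hPUge hxa.le
    nlinarith [h3]
  · -- upper bound
    calc x ^ α * PU ≤ x ^ α * S := mul_le_mul_of_nonneg_left hPUle hxa.le
      _ ≤ x ^ α * ((c0 * x ^ (-α) * (1 + Rbar (x / bn))) * B) :=
          mul_le_mul_of_nonneg_left hSup hxa.le
      _ = (x ^ α * x ^ (-α)) * (c0 * B * (1 + Rbar (x / bn))) := by ring
      _ = c0 * B * (1 + Rbar (x / bn)) := by rw [hid]; ring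
end
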